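/- arXiv:2309.01465 — 4 statements merged into one kernel-verified Lean document; each statement's English description precedes it below -/
import Mathlib

section
/- Let Θ ⊆ ℝ and let φ : Θ → (0,1) → ℝ be a family of functions such that each φ_θ is twice differentiable on (0,1) with φ_θ'(s) < 0 for all s ∈ (0,1), and such that for any θ₂ < θ₁ in Θ the ratio s ↦ φ'_{θ₂}(s)/φ'_{θ₁}(s) is differentiable with strictly positive derivative on (0,1). Then the dependence parameter is identifiable: if θ₁, θ₂ ∈ Θ and there exists s ∈ (0,1) with φ''_{θ₁}(s)·φ'_{θ₂}(s) = φ''_{θ₂}(s)·φ'_{θ₁}(s) (equivalently φ''_{θ₁}(s)/φ'_{θ₁}(s) = φ''_{θ₂}(s)/φ'_{θ₂}(s)), then θ₁ = θ₂. -/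
open Set

lemma aux_not_lt
    (Θ : Set ℝ) (φ φ' φ'' : ℝ → ℝ → ℝ)
    (hderiv : ∀ θ ∈ Θ, ∀ s ∈ Ioo (0:ℝ) 1,
      HasDerivAt (φ θ) (φ' θ s) s ∧ HasDerivAt (φ' θ) (φ'' θ s) s)
    (hneg : ∀ θ ∈ Θ, ∀ s ∈ Ioo (0:ℝ) 1, φ' θ s < 0)
    (hratio : ∀ θ₁ ∈ Θ, ∀ θ₂ ∈ Θ, θ₂ < θ₁ → ∀ s ∈ Ioo (0:ℝ) 1,
      DifferentiableAt ℝ (fun u => φ' θ₂ u / φ' θ₁ u) s ∧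
      0 < deriv (fun u => φ' θ₂ u / φ' θ₁ u) s)
    (θ₁ θ₂ : ℝ) (hθ₁ : θ₁ ∈ Θ) (hθ₂ : θ₂ ∈ Θ) (hlt : θ₂ < θ₁)
    (s : ℝ) (hs : s ∈ Ioo (0:ℝ) 1)
    (heq : φ'' θ₁ s * φ' θ₂ s = φ'' θ₂ s * φ' θ₁ s) : False := by
  obtain ⟨hd, hpos⟩ := hratio θ₁ hθ₁ θ₂ hθ₂ hlt s hs
  have h1 := (hderiv θ₁ hθ₁ s hs).2
  have h2 := (hderiv θ₂ hθ₂ s hs).2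
  have hne : φ' θ₁ s ≠ 0 := (hneg θ₁ hθ₁ s hs).ne
  have hdiv : HasDerivAt (fun u => φ' θ₂ u / φ' θ₁ u)
      ((φ'' θ₂ s * φ' θ₁ s - φ' θ₂ s * φ'' θ₁ s) / (φ' θ₁ s)^2) s := h2.div h1 hne
  have : deriv (fun u => φ' θ₂ u / φ' θ₁ u) s
      = (φ'' θ₂ s * φ' θ₁ s - φ' θ₂ s * φ'' θ₁ s) / (φ' θ₁ s)^2 := hdiv.deriv
  rw [this] at hpos
  have : φ'' θ₂ s * φ' θ₁ s - φ' θ₂ s * φ'' θ₁ s = 0 := by linarith [mul_comm (φ'' θ₁ s) (φ' θ₂ s)]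
  rw [this] at hpos
  simp at hpos

/-- Theorem 1 of the paper: if each generator `φ θ` is twice differentiable on `(0,1)` with
negative first derivative, and for `θ₂ < θ₁` in `Θ` the ratio `s ↦ φ' θ₂ s / φ' θ₁ s` is
differentiable with strictly positive derivative on `(0,1)`, then the dependence parameter is
identifiable: equality of the generator ratios `φ''/φ'` at a single point of `(0,1)` forces
`θ₁ = θ₂`. -/
theorem dependence_parameter_identifiable
    (Θ : Set ℝ) (φ φ' φ'' : ℝ → ℝ → ℝ)
    (hderiv : ∀ θ ∈ Θ, ∀ s ∈ Ioo (0:ℝ) 1,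
      HasDerivAt (φ θ) (φ' θ s) s ∧ HasDerivAt (φ' θ) (φ'' θ s) s)
    (hneg : ∀ θ ∈ Θ, ∀ s ∈ Ioo (0:ℝ) 1, φ' θ s < 0)
    (hratio : ∀ θ₁ ∈ Θ, ∀ θ₂ ∈ Θ, θ₂ < θ₁ → ∀ s ∈ Ioo (0:ℝ) 1,
      DifferentiableAt ℝ (fun u => φ' θ₂ u / φ' θ₁ u) s ∧
      0 < deriv (fun u => φ' θ₂ u / φ' θ₁ u) s)
    (θ₁ θ₂ : ℝ) (hθ₁ : θ₁ ∈ Θ) (hθ₂ : θ₂ ∈ Θ)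
    (heq : ∃ s ∈ Ioo (0:ℝ) 1, φ'' θ₁ s * φ' θ₂ s = φ'' θ₂ s * φ' θ₁ s) :
    θ₁ = θ₂ := by
  obtain ⟨s, hs, heq⟩ := heq
  rcases lt_trichotomy θ₁ θ₂ with h | h | h
  · exact absurd heq.symm (fun e => aux_not_lt Θ φ φ' φ'' hderiv hneg hratio θ₂ θ₁ hθ₂ hθ₁ h s hs e)
  · exact h
  · exact absurd heq (fun e => aux_not_lt Θ φ φ' φ'' hderiv hneg hratio θ₁ θ₂ hθ₁ hθ₂ h s hs e)
end

section
/- Let U ⊆ ℝ² be open, θ ≠ 0, and π : U → (0,1) twice continuously differentiable. Suppose there exist functions g₁, g₂ : ℝ → ℝ with φ_θ(π(z₁,z₂)) = g₁(z₁) + g₂(z₂) on U, where φ_θ(s) = (s^{−θ} − 1)/θ is the Clayton generator. Then at every point of U: π·(∂²π/∂z₁∂z₂) = (θ+1)·(∂π/∂z₁)·(∂π/∂z₂); in particular, wherever the partial derivatives of π in z₁ and z₂ are nonzero, θ = π·(∂²π/∂z₁∂z₂)/((∂π/∂z₁)·(∂π/∂z₂)) − 1. -/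
open Set Filter Topology

/-!
If `φ_θ ∘ π = g₁(z₁) + g₂(z₂)`, then the partial derivative of `φ_θ ∘ π` in `z₁` does not depend on
`z₂`, so its derivative in `z₂` vanishes. For the Clayton generator, `φ_θ'(s) = -s^(-θ-1)`, so
that mixed derivative is `π^(-θ-2) · ((θ+1) π₁ π₂ - π π₁₂)`; since `π > 0` the bracket vanishes.
-/

section AddSeparable

variable {𝕜 E : Type*} [NontriviallyNormedField 𝕜] [NormedAddCommGroup E] [NormedSpace 𝕜 E]
  {U : Set (𝕜 × 𝕜)} {f f₁ : 𝕜 × 𝕜 → E} {a b : 𝕜 → E} {p : 𝕜 × 𝕜}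

theorem eventually_partialDeriv_fst_eq_of_add_separable (hU : IsOpen U)
    (hsep : ∀ q ∈ U, f q = a q.1 + b q.2)
    (hf₁ : ∀ q ∈ U, HasDerivAt (fun x => f (x, q.2)) (f₁ q) q.1) (hp : p ∈ U) :
    ∀ᶠ y in 𝓝 p.2, f₁ (p.1, y) = f₁ p := by
  obtain ⟨s, hs, t, ht, hst⟩ := mem_nhds_prod_iff.1 (hU.mem_nhds hp)
  filter_upwards [ht] with y hy
  have hshift : (fun x => f (x, y)) =ᶠ[𝓝 p.1] fun x => f (x, p.2) + (b y - b p.2) := by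
    filter_upwards [hs] with x hx
    rw [hsep (x, y) (hst ⟨hx, hy⟩), hsep (x, p.2) (hst ⟨hx, mem_of_mem_nhds ht⟩)]
    abel
  exact (hf₁ (p.1, y) (hst ⟨mem_of_mem_nhds hs, hy⟩)).unique
    (((hf₁ p hp).add_const _).congr_of_eventuallyEq hshift)

theorem mixed_partialDeriv_eq_zero_of_add_separable {f₁₂ : E} (hU : IsOpen U)
    (hsep : ∀ q ∈ U, f q = a q.1 + b q.2)
    (hf₁ : ∀ q ∈ U, HasDerivAt (fun x => f (x, q.2)) (f₁ q) q.1) (hp : p ∈ U)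
    (hf₁₂ : HasDerivAt (fun y => f₁ (p.1, y)) f₁₂ p.2) :
    f₁₂ = 0 :=
  hf₁₂.unique <| (hasDerivAt_const p.2 (f₁ p)).congr_of_eventuallyEq
    (eventually_partialDeriv_fst_eq_of_add_separable hU hsep hf₁ hp)

end AddSeparable

section Clayton

noncomputable def claytonGenerator (θ s : ℝ) : ℝ := (s ^ (-θ) - 1) / θ

theorem hasDerivAt_claytonGenerator {θ s : ℝ} (hθ : θ ≠ 0) (hs : 0 < s) :
    HasDerivAt (claytonGenerator θ) (-s ^ (-θ - 1)) s := by
  refine (((Real.hasDerivAt_rpow_const (Or.inl hs.ne')).sub_const 1).div_const θ).congr_deriv ?_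
  field_simp

theorem hasDerivAt_neg_rpow_mul {θ y₀ u' v' : ℝ} {u v : ℝ → ℝ} (hu₀ : 0 < u y₀)
    (hu : HasDerivAt u u' y₀) (hv : HasDerivAt v v' y₀) :
    HasDerivAt (fun y => -u y ^ (-θ - 1) * v y)
      (u y₀ ^ (-θ - 2) * ((θ + 1) * (v y₀ * u') - u y₀ * v')) y₀ := by
  refine ((hu.rpow_const (p := -θ - 1) (Or.inl hu₀.ne')).neg.mul hv).congr_deriv ?_
  have hpow : u y₀ ^ (-θ - 1) = u y₀ ^ (-θ - 2) * u y₀ := by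
    rw [← Real.rpow_add_one hu₀.ne']
    ring_nf
  rw [Pi.neg_apply, show -θ - 1 - 1 = -θ - 2 by ring, hpow]
  ring

end Clayton

theorem clayton_identification_general
    (U : Set (ℝ × ℝ)) (hU : IsOpen U) (θ : ℝ) (hθ : θ ≠ 0)
    (π π₁ π₂ π₁₂ : ℝ × ℝ → ℝ)
    (hπmem : ∀ p ∈ U, π p ∈ Ioo (0:ℝ) 1)
    (hπ₁ : ∀ p ∈ U, HasDerivAt (fun x => π (x, p.2)) (π₁ p) p.1)
    (hπ₂ : ∀ p ∈ U, HasDerivAt (fun y => π (p.1, y)) (π₂ p) p.2)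
    (hπ₁₂ : ∀ p ∈ U, HasDerivAt (fun y => π₁ (p.1, y)) (π₁₂ p) p.2)
    (g₁ g₂ : ℝ → ℝ)
    (hsep : ∀ p ∈ U, (π p ^ (-θ) - 1) / θ = g₁ p.1 + g₂ p.2) :
    ∀ p ∈ U,
      π p * π₁₂ p = (θ + 1) * (π₁ p * π₂ p) ∧
      (π₁ p ≠ 0 → π₂ p ≠ 0 →
        θ = π p * π₁₂ p / (π₁ p * π₂ p) - 1) := by
  intro p hp
  have hpos : ∀ q ∈ U, 0 < π q := fun q hq => (hπmem q hq).1
  have hφ₁ : ∀ q ∈ U, HasDerivAt (fun x => claytonGenerator θ (π (x, q.2)))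
      (-π q ^ (-θ - 1) * π₁ q) q.1 :=
    fun q hq => HasDerivAt.comp (h₂ := claytonGenerator θ) q.1
      (hasDerivAt_claytonGenerator hθ (hpos q hq)) (hπ₁ q hq)
  have hmixed := mixed_partialDeriv_eq_zero_of_add_separable hU hsep hφ₁ hp
    (hasDerivAt_neg_rpow_mul (hpos p hp) (hπ₂ p hp) (hπ₁₂ p hp))
  have key : π p * π₁₂ p = (θ + 1) * (π₁ p * π₂ p) := by
    have := (mul_eq_zero.1 hmixed).resolve_left (Real.rpow_pos_of_pos (hpos p hp) _).ne'
    linarith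
  refine ⟨key, fun h₁ h₂ => ?_⟩
  rw [key, mul_div_assoc, div_self (mul_ne_zero h₁ h₂)]
  ring

/-- Example 1 of the paper (Clayton copula): if `φ_θ ∘ π` is additively separable on an open set
`U ⊆ ℝ²`, where `φ_θ(s) = (s^{-θ} - 1)/θ` is the Clayton generator (`θ ≠ 0`) and
`π : U → (0,1)` is twice continuously differentiable, then on `U`
`π·π₁₂ = (θ+1)·π₁·π₂`; in particular, wherever `π₁ ≠ 0` and `π₂ ≠ 0`,
`θ = π·π₁₂/(π₁·π₂) - 1`. -/
theorem clayton_identification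
    (U : Set (ℝ × ℝ)) (hU : IsOpen U) (θ : ℝ) (hθ : θ ≠ 0)
    (π π₁ π₂ π₁₂ : ℝ × ℝ → ℝ)
    (hπmem : ∀ p ∈ U, π p ∈ Ioo (0:ℝ) 1)
    (hπ₁ : ∀ p ∈ U, HasDerivAt (fun x => π (x, p.2)) (π₁ p) p.1)
    (hπ₂ : ∀ p ∈ U, HasDerivAt (fun y => π (p.1, y)) (π₂ p) p.2)
    (hπ₁₂ : ∀ p ∈ U, HasDerivAt (fun y => π₁ (p.1, y)) (π₁₂ p) p.2)
    (hπ₁₂cont : ContinuousOn π₁₂ U)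
    (g₁ g₂ : ℝ → ℝ)
    (hsep : ∀ p ∈ U, (π p ^ (-θ) - 1) / θ = g₁ p.1 + g₂ p.2) :
    ∀ p ∈ U,
      π p * π₁₂ p = (θ + 1) * (π₁ p * π₂ p) ∧
      (π₁ p ≠ 0 → π₂ p ≠ 0 →
        θ = π p * π₁₂ p / (π₁ p * π₂ p) - 1) :=
  clayton_identification_general U hU θ hθ π π₁ π₂ π₁₂ hπmem hπ₁ hπ₂ hπ₁₂ g₁ g₂ hsep
end

section
/- Fix s ∈ (0,1). The map θ ↦ θ/(1 − e^{−θs}) is strictly increasing on ℝ\{0}: for any θ₁ < θ₂ with θ₁, θ₂ ≠ 0, θ₁/(1 − e^{−θ₁s}) < θ₂/(1 − e^{−θ₂s}). Equivalently, θ ↦ θ/(e^{−θs} − 1) is strictly decreasing on ℝ\{0}. Consequently, for any c ∈ ℝ the equation θ/(e^{−θs} − 1) = c has at most one solution θ ∈ ℝ\{0}. -/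
open Set

noncomputable def frankF : ℝ → ℝ := fun x => x / (1 - Real.exp (-x))

lemma frank_denom_ne {x : ℝ} (hx : x ≠ 0) : 1 - Real.exp (-x) ≠ 0 := by
  intro h
  have : Real.exp (-x) = 1 := by linarith
  have h2 := Real.exp_injective (this.trans Real.exp_zero.symm)
  exact hx (by simpa using h2)

lemma frank_denom_lt {x : ℝ} (hx : x ≠ 0) : 1 - Real.exp (-x) < x := by
  have := Real.add_one_lt_exp (neg_ne_zero.mpr hx)
  linarith

lemma frankF_hasDerivAt {x : ℝ} (hx : x ≠ 0) :
    HasDerivAt frankF ((1 * (1 - Real.exp (-x)) - x * Real.exp (-x)) /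
      (1 - Real.exp (-x)) ^ 2) x := by
  have hd : HasDerivAt (fun x : ℝ => 1 - Real.exp (-x)) (Real.exp (-x)) x := by
    have := ((hasDerivAt_neg x).exp).const_sub 1
    simpa using this
  exact (hasDerivAt_id x).div hd (frank_denom_ne hx)

lemma frankF_deriv_pos {x : ℝ} (hx : x ≠ 0) :
    0 < (1 * (1 - Real.exp (-x)) - x * Real.exp (-x)) / (1 - Real.exp (-x)) ^ 2 := by
  have h1 : Real.exp (-x) * Real.exp x = 1 := by
    rw [← Real.exp_add]; simp
  have h2 : x + 1 < Real.exp x := Real.add_one_lt_exp hx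
  have h3 : (0:ℝ) < Real.exp (-x) := Real.exp_pos _
  have hnum : 0 < 1 * (1 - Real.exp (-x)) - x * Real.exp (-x) := by nlinarith
  exact div_pos hnum (pow_two_pos_of_ne_zero (frank_denom_ne hx))

lemma frankF_gt_one {x : ℝ} (hx : 0 < x) : 1 < frankF x := by
  have hd : 0 < 1 - Real.exp (-x) := by
    have : Real.exp (-x) < 1 := Real.exp_lt_one_iff.mpr (by linarith)
    linarith
  rw [frankF, lt_div_iff₀ hd]
  have := frank_denom_lt hx.ne'
  linarith

lemma frankF_lt_one {x : ℝ} (hx : x < 0) : frankF x < 1 := by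
  have hd : 1 - Real.exp (-x) < 0 := by
    have : 1 < Real.exp (-x) := by
      rw [show (1:ℝ) = Real.exp 0 by simp]
      exact Real.exp_lt_exp.mpr (by linarith)
    linarith
  rw [frankF, div_lt_iff_of_neg hd]
  have := frank_denom_lt hx.ne
  linarith

lemma frankF_strictMonoOn_Ioi : StrictMonoOn frankF (Ioi (0:ℝ)) := by
  apply strictMonoOn_of_deriv_pos (convex_Ioi 0)
  · exact fun x hx => (frankF_hasDerivAt (ne_of_gt hx)).continuousAt.continuousWithinAt
  · intro x hx
    rw [interior_Ioi] at hx
    rw [(frankF_hasDerivAt (ne_of_gt hx)).deriv]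
    exact frankF_deriv_pos (ne_of_gt hx)

lemma frankF_strictMonoOn_Iio : StrictMonoOn frankF (Iio (0:ℝ)) := by
  apply strictMonoOn_of_deriv_pos (convex_Iio 0)
  · exact fun x hx => (frankF_hasDerivAt (ne_of_lt hx)).continuousAt.continuousWithinAt
  · intro x hx
    rw [interior_Iio] at hx
    rw [(frankF_hasDerivAt (ne_of_lt hx)).deriv]
    exact frankF_deriv_pos (ne_of_lt hx)

lemma frankF_strict {x y : ℝ} (hx : x ≠ 0) (hy : y ≠ 0) (hxy : x < y) :
    frankF x < frankF y := by
  rcases lt_or_gt_of_ne hx with hx' | hx'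
  · rcases lt_or_gt_of_ne hy with hy' | hy'
    · exact frankF_strictMonoOn_Iio hx' hy' hxy
    · exact (frankF_lt_one hx').trans (frankF_gt_one hy')
  · exact frankF_strictMonoOn_Ioi hx' (hx'.trans hxy) hxy

/-- Example 3 of the paper (Frank copula, uniqueness): fix `s ∈ (0,1)`. The map
`θ ↦ θ/(1 - e^{-θs})` is strictly increasing on `ℝ \ {0}`; equivalently,
`θ ↦ θ/(e^{-θs} - 1)` is strictly decreasing on `ℝ \ {0}`. Consequently, for any `c ∈ ℝ` the
equation `θ/(e^{-θs} - 1) = c` has at most one solution `θ ∈ ℝ \ {0}`. -/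
theorem frank_identification_unique (s : ℝ) (hs : s ∈ Ioo (0:ℝ) 1) :
    (∀ θ₁ θ₂ : ℝ, θ₁ ≠ 0 → θ₂ ≠ 0 → θ₁ < θ₂ →
      θ₁ / (1 - Real.exp (-θ₁ * s)) < θ₂ / (1 - Real.exp (-θ₂ * s))) ∧
    (∀ θ₁ θ₂ : ℝ, θ₁ ≠ 0 → θ₂ ≠ 0 → θ₁ < θ₂ →
      θ₂ / (Real.exp (-θ₂ * s) - 1) < θ₁ / (Real.exp (-θ₁ * s) - 1)) ∧
    (∀ c : ℝ, ∀ θ₁ θ₂ : ℝ, θ₁ ≠ 0 → θ₂ ≠ 0 →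
      θ₁ / (Real.exp (-θ₁ * s) - 1) = c →
      θ₂ / (Real.exp (-θ₂ * s) - 1) = c → θ₁ = θ₂) := by
  obtain ⟨hs0, _⟩ := hs
  have hrep : ∀ θ : ℝ, θ / (1 - Real.exp (-θ * s)) = frankF (θ * s) / s := by
    intro θ
    rw [frankF]
    rw [div_div, show -(θ * s) = -θ * s by ring]
    rw [mul_div_mul_right _ _ (ne_of_gt hs0)]
  have inc : ∀ θ₁ θ₂ : ℝ, θ₁ ≠ 0 → θ₂ ≠ 0 → θ₁ < θ₂ →
      θ₁ / (1 - Real.exp (-θ₁ * s)) < θ₂ / (1 - Real.exp (-θ₂ * s)) := by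
    intro θ₁ θ₂ h1 h2 h12
    rw [hrep θ₁, hrep θ₂]
    exact div_lt_div_of_pos_right (frankF_strict (mul_ne_zero h1 (ne_of_gt hs0))
      (mul_ne_zero h2 (ne_of_gt hs0)) (mul_lt_mul_of_pos_right h12 hs0)) hs0
  have flip : ∀ θ : ℝ, θ / (Real.exp (-θ * s) - 1) = -(θ / (1 - Real.exp (-θ * s))) := by
    intro θ
    rw [show Real.exp (-θ * s) - 1 = -(1 - Real.exp (-θ * s)) by ring, div_neg]
  have dec : ∀ θ₁ θ₂ : ℝ, θ₁ ≠ 0 → θ₂ ≠ 0 → θ₁ < θ₂ →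
      θ₂ / (Real.exp (-θ₂ * s) - 1) < θ₁ / (Real.exp (-θ₁ * s) - 1) := by
    intro θ₁ θ₂ h1 h2 h12
    rw [flip θ₁, flip θ₂]
    exact neg_lt_neg (inc θ₁ θ₂ h1 h2 h12)
  refine ⟨inc, dec, ?_⟩
  intro c θ₁ θ₂ h1 h2 e1 e2
  by_contra hne
  rcases lt_or_gt_of_ne hne with h | h
  · exact absurd (e2.trans e1.symm) (ne_of_lt (dec θ₁ θ₂ h1 h2 h))
  · exact absurd (e1.trans e2.symm) (ne_of_lt (dec θ₂ θ₁ h2 h1 h))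
end

section
/- Let θ₂ < θ₁ with θ₁, θ₂ ≠ 0, and let φ_θ(s) = −log((e^{−θs} − 1)/(e^{−θ} − 1)) be the Frank generator. Then the function s ↦ φ'_{θ₂}(s)/φ'_{θ₁}(s) = (θ₂ e^{−θ₂s}(e^{−θ₁s} − 1))/(θ₁ e^{−θ₁s}(e^{−θ₂s} − 1)) is strictly increasing on (0,1). -/
/-!
With `E_θ(s) = (e^{θs} - 1)/θ` (`expSubOneDiv`) the Frank generator satisfies
`φ'_θ = -1/E_θ`, so the ratio in question is `E_{θ₁}/E_{θ₂}`. As `E_θ' (s) = e^{θs}` and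
`E_θ > 0` on `(0, ∞)`, its derivative has the sign of
`e^{θ₁s}/E_{θ₁}(s) - e^{θ₂s}/E_{θ₂}(s) = (H(θ₁s) - H(θ₂s))/s`, where
`H(x) = x e^x/(e^x - 1)` (`mulExpDivExpSubOne`) is strictly increasing on `ℝ ∖ {0}`:
`H' > 0` away from `0`, and `H < 1` on `(-∞, 0)`, `H > 1` on `(0, ∞)`.
-/

open Set Real

lemma Real.exp_sub_one_ne_zero {x : ℝ} (hx : x ≠ 0) : exp x - 1 ≠ 0 := by
  simp [sub_eq_zero, Real.exp_eq_one_iff, hx]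

lemma Real.exp_sub_one_lt_mul_exp {x : ℝ} (hx : x ≠ 0) : exp x - 1 < x * exp x := by
  have h := add_one_lt_exp (neg_ne_zero.2 hx)
  have hmul : exp (-x) * exp x = 1 := by rw [← exp_add, neg_add_cancel, exp_zero]
  nlinarith [exp_pos x]

noncomputable def mulExpDivExpSubOne (x : ℝ) : ℝ := x * exp x / (exp x - 1)

lemma hasDerivAt_mulExpDivExpSubOne {x : ℝ} (hx : x ≠ 0) :
    HasDerivAt mulExpDivExpSubOne (exp x * (exp x - 1 - x) / (exp x - 1) ^ 2) x :=
  (((hasDerivAt_id' x).fun_mul (hasDerivAt_exp x)).div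
    ((hasDerivAt_exp x).sub_const 1) (exp_sub_one_ne_zero hx)).congr_deriv (by ring)

lemma strictMonoOn_mulExpDivExpSubOne {D : Set ℝ} (hD : Convex ℝ D) (h0 : (0 : ℝ) ∉ D) :
    StrictMonoOn mulExpDivExpSubOne D := by
  have hne : ∀ x ∈ D, x ≠ 0 := fun x hx h => h0 (h ▸ hx)
  refine strictMonoOn_of_deriv_pos hD ?_ fun x hx => ?_
  · exact fun x hx => (hasDerivAt_mulExpDivExpSubOne (hne x hx)).continuousAt.continuousWithinAt
  · have hx0 := hne x (interior_subset hx)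
    rw [(hasDerivAt_mulExpDivExpSubOne hx0).deriv]
    have hnum : 0 < exp x - 1 - x := by linarith [add_one_lt_exp hx0]
    have hden := exp_sub_one_ne_zero hx0
    exact div_pos (mul_pos (exp_pos x) hnum) (by positivity)

lemma mulExpDivExpSubOne_lt_one {x : ℝ} (hx : x < 0) : mulExpDivExpSubOne x < 1 := by
  have hd : exp x - 1 < 0 := by linarith [exp_lt_one_iff.2 hx]
  rw [mulExpDivExpSubOne, div_lt_one_of_neg hd]
  exact exp_sub_one_lt_mul_exp hx.ne

lemma one_lt_mulExpDivExpSubOne {x : ℝ} (hx : 0 < x) : 1 < mulExpDivExpSubOne x := by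
  have hd : 0 < exp x - 1 := by linarith [one_lt_exp_iff.2 hx]
  rw [mulExpDivExpSubOne, one_lt_div hd]
  exact exp_sub_one_lt_mul_exp hx.ne'

lemma mulExpDivExpSubOne_lt_mulExpDivExpSubOne {a b : ℝ} (ha : a ≠ 0) (hb : b ≠ 0)
    (hab : a < b) : mulExpDivExpSubOne a < mulExpDivExpSubOne b := by
  rcases ha.lt_or_gt with ha | ha
  · rcases hb.lt_or_gt with hb | hb
    · exact strictMonoOn_mulExpDivExpSubOne (convex_Iio 0) (by simp) ha hb hab
    · exact (mulExpDivExpSubOne_lt_one ha).trans (one_lt_mulExpDivExpSubOne hb)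
  · exact strictMonoOn_mulExpDivExpSubOne (convex_Ioi 0) (by simp) ha (ha.trans hab) hab

noncomputable def expSubOneDiv (θ s : ℝ) : ℝ := (exp (θ * s) - 1) / θ

section expSubOneDiv

variable {θ θ₁ θ₂ s : ℝ}

lemma hasDerivAt_expSubOneDiv (hθ : θ ≠ 0) : HasDerivAt (expSubOneDiv θ) (exp (θ * s)) s :=
  ((((hasDerivAt_id' s).const_mul θ).exp.sub_const 1).div_const θ).congr_deriv
    (by field_simp)

lemma expSubOneDiv_pos (hθ : θ ≠ 0) (hs : 0 < s) : 0 < expSubOneDiv θ s := by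
  rcases hθ.lt_or_gt with hθ | hθ
  · exact div_pos_of_neg_of_neg (by linarith [exp_lt_one_iff.2 (mul_neg_of_neg_of_pos hθ hs)]) hθ
  · exact div_pos (by linarith [one_lt_exp_iff.2 (mul_pos hθ hs)]) hθ

lemma mul_exp_div_expSubOneDiv (hθ : θ ≠ 0) :
    s * exp (θ * s) / expSubOneDiv θ s = mulExpDivExpSubOne (θ * s) := by
  rw [expSubOneDiv, mulExpDivExpSubOne]
  field_simp

lemma strictMonoOn_expSubOneDiv_div_expSubOneDiv (h₁ : θ₁ ≠ 0) (h₂ : θ₂ ≠ 0) (hlt : θ₂ < θ₁) :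
    StrictMonoOn (fun s => expSubOneDiv θ₁ s / expSubOneDiv θ₂ s) (Ioi 0) := by
  refine strictMonoOn_of_deriv_pos (convex_Ioi 0) ?_ fun s hs => ?_
  · exact fun s hs => ((hasDerivAt_expSubOneDiv h₁).div (hasDerivAt_expSubOneDiv h₂)
      (expSubOneDiv_pos h₂ hs).ne').continuousAt.continuousWithinAt
  rw [interior_Ioi] at hs
  have hE₁ := expSubOneDiv_pos h₁ hs
  have hE₂ := expSubOneDiv_pos h₂ hs
  have hderiv : HasDerivAt (fun s => expSubOneDiv θ₁ s / expSubOneDiv θ₂ s)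
      ((exp (θ₁ * s) * expSubOneDiv θ₂ s - expSubOneDiv θ₁ s * exp (θ₂ * s)) /
        expSubOneDiv θ₂ s ^ 2) s :=
    (hasDerivAt_expSubOneDiv h₁).div (hasDerivAt_expSubOneDiv h₂) hE₂.ne'
  rw [hderiv.deriv]
  have hH : mulExpDivExpSubOne (θ₂ * s) < mulExpDivExpSubOne (θ₁ * s) :=
    mulExpDivExpSubOne_lt_mulExpDivExpSubOne (mul_ne_zero h₂ hs.ne') (mul_ne_zero h₁ hs.ne')
      (mul_lt_mul_of_pos_right hlt hs)
  rw [← mul_exp_div_expSubOneDiv h₂, ← mul_exp_div_expSubOneDiv h₁, mul_div_assoc,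
    mul_div_assoc, mul_lt_mul_iff_right₀ hs, div_lt_div_iff₀ hE₂ hE₁] at hH
  exact div_pos (by linarith) (by positivity)

end expSubOneDiv

lemma deriv_frankGenerator {θ s : ℝ} (hθ : θ ≠ 0) (hs : s ≠ 0) :
    deriv (fun u : ℝ => -log ((exp (-θ * u) - 1) / (exp (-θ) - 1))) s =
      -(expSubOneDiv θ s)⁻¹ := by
  have hθ' : exp (-θ) - 1 ≠ 0 := exp_sub_one_ne_zero (neg_ne_zero.2 hθ)
  have hθs : exp (-θ * s) - 1 ≠ 0 := exp_sub_one_ne_zero (by simp [hθ, hs])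
  have hderiv : HasDerivAt (fun u : ℝ => -log ((exp (-θ * u) - 1) / (exp (-θ) - 1)))
      (θ * exp (-θ * s) / (exp (-θ * s) - 1)) s :=
    (((((hasDerivAt_id' s).const_mul (-θ)).exp.sub_const 1).div_const _).log
      (div_ne_zero hθs hθ')).neg.congr_deriv (by field_simp)
  have hθs₁ : exp (θ * s) - 1 ≠ 0 := exp_sub_one_ne_zero (mul_ne_zero hθ hs)
  have hθs₂ : 1 - exp (θ * s) ≠ 0 := by rwa [← neg_sub, neg_ne_zero]
  rw [hderiv.deriv, expSubOneDiv, neg_mul, exp_neg]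
  field_simp
  ring

lemma frank_ratio_eq_expSubOneDiv_div {θ₁ θ₂ s : ℝ} (h₁ : θ₁ ≠ 0) (h₂ : θ₂ ≠ 0)
    (hs : s ≠ 0) :
    θ₂ * exp (-θ₂ * s) * (exp (-θ₁ * s) - 1) / (θ₁ * exp (-θ₁ * s) * (exp (-θ₂ * s) - 1)) =
      expSubOneDiv θ₁ s / expSubOneDiv θ₂ s := by
  have hθs₁ : exp (θ₂ * s) - 1 ≠ 0 := exp_sub_one_ne_zero (mul_ne_zero h₂ hs)
  have hθs₂ : 1 - exp (θ₂ * s) ≠ 0 := by rwa [← neg_sub, neg_ne_zero]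
  rw [expSubOneDiv, expSubOneDiv, neg_mul, neg_mul, exp_neg, exp_neg]
  field_simp
  ring

/-- Assumption 2(ii) for the Frank family: for `θ₂ < θ₁` (both nonzero), with Frank generator
`φ_θ(s) = -log((e^{-θs} - 1)/(e^{-θ} - 1))`, the ratio of derivatives satisfies
`φ'_{θ₂}(s)/φ'_{θ₁}(s) = (θ₂ e^{-θ₂s}(e^{-θ₁s} - 1))/(θ₁ e^{-θ₁s}(e^{-θ₂s} - 1))` for
`s ∈ (0,1)`, and this ratio is strictly increasing on `(0,1)`. -/
theorem frank_assumption2ii (θ₁ θ₂ : ℝ) (h₁ : θ₁ ≠ 0) (h₂ : θ₂ ≠ 0) (hlt : θ₂ < θ₁) :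
    (∀ s ∈ Ioo (0:ℝ) 1,
      deriv (fun u : ℝ => -Real.log ((Real.exp (-θ₂ * u) - 1) / (Real.exp (-θ₂) - 1))) s /
        deriv (fun u : ℝ => -Real.log ((Real.exp (-θ₁ * u) - 1) / (Real.exp (-θ₁) - 1))) s =
        (θ₂ * Real.exp (-θ₂ * s) * (Real.exp (-θ₁ * s) - 1)) /
          (θ₁ * Real.exp (-θ₁ * s) * (Real.exp (-θ₂ * s) - 1))) ∧
    StrictMonoOn (fun s : ℝ =>
      (θ₂ * Real.exp (-θ₂ * s) * (Real.exp (-θ₁ * s) - 1)) /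
        (θ₁ * Real.exp (-θ₁ * s) * (Real.exp (-θ₂ * s) - 1))) (Ioo 0 1) := by
  have hratio : EqOn (fun s => expSubOneDiv θ₁ s / expSubOneDiv θ₂ s) (fun s : ℝ =>
      (θ₂ * exp (-θ₂ * s) * (exp (-θ₁ * s) - 1)) /
        (θ₁ * exp (-θ₁ * s) * (exp (-θ₂ * s) - 1))) (Ioo 0 1) := fun s hs =>
    (frank_ratio_eq_expSubOneDiv_div h₁ h₂ hs.1.ne').symm
  refine ⟨fun s hs => ?_, ?_⟩
  · rw [deriv_frankGenerator h₂ hs.1.ne', deriv_frankGenerator h₁ hs.1.ne', neg_div_neg_eq,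
      inv_div_inv]
    exact hratio hs
  · exact ((strictMonoOn_expSubOneDiv_div_expSubOneDiv h₁ h₂ hlt).mono
      Ioo_subset_Ioi_self).congr hratio
end
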